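/- Let k be a field of characteristic zero and b ∈ k with b ≠ 0. On the free k-module with basis the monomials x^k y₁^l y₂^s (k,l,s ∈ ℕ), define k-linear maps ∂_x, ∂_{y₁}, ∂_{y₂} by ∂_x(x^k y₁^l y₂^s) = k x^{k−1} y₁^l y₂^s, ∂_{y₁}(x^k y₁^l y₂^s) = l b^{−k} x^k y₁^{l−1} y₂^s, ∂_{y₂}(x^k y₁^l y₂^s) = s b^{k+2l} x^k y₁^l y₂^{s−1}. Then for an element q in this module, ∂_x(q) = ∂_{y₁}(q) = ∂_{y₂}(q) = 0 if and only if q is a scalar multiple of the monomial x⁰y₁⁰y₂⁰ = 1. -/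

import Mathlib

/-!
Each derivative sends a monomial to a multiple of the monomial with one exponent lowered, and
lowering is injective on the monomials it does not kill; so the coefficient of `∂ q` at the
lowered monomial is the coefficient of `q` at `p` times that multiple. Every monomial other
than `1` has a positive exponent, whose multiple (a positive integer times a power of `b`) is
nonzero in characteristic zero.
-/

open Finsupp

section

variable {R ι κ : Type*} [CommSemiring R]

lemma Finsupp.linearMap_apply_of_injOn (d : (ι →₀ R) →ₗ[R] (κ →₀ R)) {c : ι → R} {f : ι → κ}
    (hd : ∀ i, d (single i 1) = c i • single (f i) 1) (hf : Set.InjOn f {i | c i ≠ 0})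
    {i : ι} (hi : c i ≠ 0) (q : ι →₀ R) : d q (f i) = c i * q i := by
  induction q using Finsupp.induction_linear with
  | zero => simp
  | add u v hu hv => simp only [map_add, Finsupp.add_apply, hu, hv, mul_add]
  | single j a =>
    rw [← mul_one a, ← smul_eq_mul, ← smul_single, map_smul, hd]
    by_cases hji : j = i
    · subst hji
      simp [mul_comm]
    · have hfj : c j = 0 ∨ f j ≠ f i := by
        by_contra! h
        exact hji (hf h.1 hi h.2)
      rcases hfj with hc | hfj
      · simp [hc, single_eq_of_ne' hji]
      · simp [single_eq_of_ne' hfj, single_eq_of_ne' hji]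

lemma Finsupp.apply_eq_zero_of_linearMap_eq_zero [NoZeroDivisors R]
    (d : (ι →₀ R) →ₗ[R] (κ →₀ R)) {c : ι → R} {f : ι → κ}
    (hd : ∀ i, d (single i 1) = c i • single (f i) 1) (hf : Set.InjOn f {i | c i ≠ 0})
    {q : ι →₀ R} (hq : d q = 0) {i : ι} (hi : c i ≠ 0) : q i = 0 := by
  have h := linearMap_apply_of_injOn d hd hf hi q
  rw [hq, Finsupp.zero_apply, eq_comm, mul_eq_zero] at h
  exact h.resolve_left hi

end

lemma injOn_decrement_fst :
    Set.InjOn (fun p : ℕ × ℕ × ℕ => (p.1 - 1, p.2.1, p.2.2)) {p | p.1 ≠ 0} := by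
  rintro ⟨k₁, l₁, s₁⟩ h₁ ⟨k₂, l₂, s₂⟩ h₂ h
  simp only [Set.mem_ofPred_eq, Prod.mk.injEq] at h₁ h₂ h ⊢
  omega

lemma injOn_decrement_snd_fst :
    Set.InjOn (fun p : ℕ × ℕ × ℕ => (p.1, p.2.1 - 1, p.2.2)) {p | p.2.1 ≠ 0} := by
  rintro ⟨k₁, l₁, s₁⟩ h₁ ⟨k₂, l₂, s₂⟩ h₂ h
  simp only [Set.mem_ofPred_eq, Prod.mk.injEq] at h₁ h₂ h ⊢
  omega

lemma injOn_decrement_snd_snd :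
    Set.InjOn (fun p : ℕ × ℕ × ℕ => (p.1, p.2.1, p.2.2 - 1)) {p | p.2.2 ≠ 0} := by
  rintro ⟨k₁, l₁, s₁⟩ h₁ ⟨k₂, l₂, s₂⟩ h₂ h
  simp only [Set.mem_ofPred_eq, Prod.mk.injEq] at h₁ h₂ h ⊢
  omega

/-- The partial derivatives `∂_x, ∂_{y₁}, ∂_{y₂}` of the calculus
on `B¹`, defined on the PBW basis `{x^k y₁^l y₂^s}`, vanish simultaneously on
`q` iff `q` is a scalar multiple of the monomial `1 = x⁰y₁⁰y₂⁰`. -/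
theorem stmt11 (K : Type*) [Field K] [CharZero K] (b : K) (hb : b ≠ 0)
    (dX dY1 dY2 : ((ℕ × ℕ × ℕ) →₀ K) →ₗ[K] ((ℕ × ℕ × ℕ) →₀ K))
    (hX : ∀ p : ℕ × ℕ × ℕ,
      dX (Finsupp.single p 1)
        = (p.1 : K) • Finsupp.single (p.1 - 1, p.2.1, p.2.2) 1)
    (hY1 : ∀ p : ℕ × ℕ × ℕ,
      dY1 (Finsupp.single p 1)
        = ((p.2.1 : K) * b ^ (-(p.1 : ℤ))) • Finsupp.single (p.1, p.2.1 - 1, p.2.2) 1)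
    (hY2 : ∀ p : ℕ × ℕ × ℕ,
      dY2 (Finsupp.single p 1)
        = ((p.2.2 : K) * b ^ (p.1 + 2 * p.2.1)) • Finsupp.single (p.1, p.2.1, p.2.2 - 1) 1) :
    ∀ q : (ℕ × ℕ × ℕ) →₀ K,
      (dX q = 0 ∧ dY1 q = 0 ∧ dY2 q = 0) ↔
      ∃ c : K, q = c • Finsupp.single ((0,0,0) : ℕ × ℕ × ℕ) 1 := by
  intro q
  constructor
  · rintro ⟨hqX, hqY1, hqY2⟩
    have hsupp : ∀ p ≠ ((0, 0, 0) : ℕ × ℕ × ℕ), q p = 0 := by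
      rintro ⟨k, l, s⟩ hp
      obtain hk | hl | hs : k ≠ 0 ∨ l ≠ 0 ∨ s ≠ 0 := by
        by_contra! h
        simp [h] at hp
      · refine apply_eq_zero_of_linearMap_eq_zero dX hX ?_ hqX (by simpa using hk)
        exact injOn_decrement_fst.mono fun p hp => by simpa using hp
      · refine apply_eq_zero_of_linearMap_eq_zero dY1 hY1 ?_ hqY1 (by simp [hl, hb])
        exact injOn_decrement_snd_fst.mono fun p hp => Nat.cast_ne_zero.mp (left_ne_zero_of_mul hp)
      · refine apply_eq_zero_of_linearMap_eq_zero dY2 hY2 ?_ hqY2 (by simp [hs, hb])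
        exact injOn_decrement_snd_snd.mono fun p hp => Nat.cast_ne_zero.mp (left_ne_zero_of_mul hp)
    refine ⟨q (0, 0, 0), ?_⟩
    rw [smul_single, smul_eq_mul, mul_one, eq_single_iff]
    refine ⟨fun p hp => ?_, rfl⟩
    by_contra h
    exact mem_support_iff.mp hp (hsupp p (by simpa using h))
  · rintro ⟨c, rfl⟩
    refine ⟨?_, ?_, ?_⟩
    · rw [map_smul, hX]; simp
    · rw [map_smul, hY1]; simp
    · rw [map_smul, hY2]; simp
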